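/- Let F be a fragment and ⟨u,α⟩, ⟨v,β⟩ V-valuations such that Duplicator has a winning strategy in the configuration (F, ⟨u,α⟩, ⟨v,β⟩). Let Q ∈ {∃,∀,¬∃,¬∀} and x a variable with x ∉ V such that the reduct Qx⁻¹F is nonempty. Then: (1) if Q ∈ {∃,∀}, Duplicator has a winning strategy in the configuration (Qx⁻¹F, ⟨u,α⟩, ⟨v,β⟩); (2) if Q ∈ {¬∃,¬∀}, Duplicator has a winning strategy in the configuration (Qx⁻¹F, ⟨v,β⟩, ⟨u,α⟩). -/

import Mathlib

set_option autoImplicit false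

instance instCountableLex {α : Type*} [Countable α] : Countable (Lex α) :=
  inferInstanceAs (Countable α)

namespace EFGames

/-! ### Syntax of first-order logic over words.
Letters of the alphabet `Λ` and first-order variables are represented by natural numbers. -/

inductive FOForm : Type where
  | top | bot | empt
  | eq (x y : ℕ) | lab (x a : ℕ)
  | lt (x y : ℕ) | le (x y : ℕ) | suc (x y : ℕ)
  | fmin (x : ℕ) | fmax (x : ℕ)
  | not (φ : FOForm) | or (φ ψ : FOForm) | and (φ ψ : FOForm)
  | ex (x : ℕ) (φ : FOForm) | all (x : ℕ) (φ : FOForm)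

/-- Free variables of a formula. -/
def FOForm.FV : FOForm → Finset ℕ
  | .top | .bot | .empt => ∅
  | .eq x y | .lt x y | .le x y | .suc x y => {x, y}
  | .lab x _ | .fmin x | .fmax x => {x}
  | .not φ => φ.FV
  | .or φ ψ | .and φ ψ => φ.FV ∪ ψ.FV
  | .ex x φ | .all x φ => φ.FV.erase x

/-- Quantifier depth. -/
def FOForm.qd : FOForm → ℕ
  | .not φ => φ.qd
  | .or φ ψ | .and φ ψ => max φ.qd ψ.qd
  | .ex _ φ | .all _ φ => φ.qd + 1
  | _ => 0

/-- All variables occurring in a formula (free or bound). -/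
def FOForm.vars : FOForm → Finset ℕ
  | .top | .bot | .empt => ∅
  | .eq x y | .lt x y | .le x y | .suc x y => {x, y}
  | .lab x _ | .fmin x | .fmax x => {x}
  | .not φ => φ.vars
  | .or φ ψ | .and φ ψ => φ.vars ∪ ψ.vars
  | .ex x φ | .all x φ => insert x φ.vars

/-- The formula contains none of the predicates `suc`, `min`, `max`, `empty`. -/
def FOForm.NoSMME : FOForm → Prop
  | .empt | .suc _ _ | .fmin _ | .fmax _ => False
  | .not φ => φ.NoSMME
  | .or φ ψ | .and φ ψ => φ.NoSMME ∧ ψ.NoSMME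
  | .ex _ φ | .all _ φ => φ.NoSMME
  | _ => True

/-- The formula contains the predicate `≤` or `<`. -/
def FOForm.HasOrder : FOForm → Prop
  | .lt _ _ | .le _ _ => True
  | .not φ => φ.HasOrder
  | .or φ ψ | .and φ ψ => φ.HasOrder ∨ ψ.HasOrder
  | .ex _ φ | .all _ φ => φ.HasOrder
  | _ => False

/-- The formula contains one of the predicates `suc`, `min`, `max`, `empty`. -/
def FOForm.HasSMME : FOForm → Prop
  | .empt | .suc _ _ | .fmin _ | .fmax _ => True
  | .not φ => φ.HasSMME
  | .or φ ψ | .and φ ψ => φ.HasSMME ∨ ψ.HasSMME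
  | .ex _ φ | .all _ φ => φ.HasSMME
  | _ => False

def FOForm.IsAtomic : FOForm → Prop
  | .top | .bot | .empt | .eq _ _ | .lab _ _ | .lt _ _ | .le _ _
  | .suc _ _ | .fmin _ | .fmax _ => True
  | _ => False

/-- A literal is an atomic formula or a negated atomic formula. -/
def FOForm.IsLiteral (φ : FOForm) : Prop :=
  φ.IsAtomic ∨ ∃ ψ : FOForm, ψ.IsAtomic ∧ φ = .not ψ

/-- A sentence is a formula without free variables. -/
def FOForm.IsSentence (φ : FOForm) : Prop := φ.FV = ∅

/-- Contexts: formulas with exactly one occurrence of a placeholder `∘`. -/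
inductive FOCtx : Type where
  | hole
  | notC (μ : FOCtx)
  | orL (μ : FOCtx) (ψ : FOForm)
  | orR (φ : FOForm) (μ : FOCtx)
  | andL (μ : FOCtx) (ψ : FOForm)
  | andR (φ : FOForm) (μ : FOCtx)
  | exC (x : ℕ) (μ : FOCtx)
  | allC (x : ℕ) (μ : FOCtx)

/-- Substituting a formula for the placeholder of a context. -/
def FOCtx.subst : FOCtx → FOForm → FOForm
  | .hole, φ => φ
  | .notC μ, φ => .not (μ.subst φ)
  | .orL μ ψ, φ => .or (μ.subst φ) ψ
  | .orR χ μ, φ => .or χ (μ.subst φ)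
  | .andL μ ψ, φ => .and (μ.subst φ) ψ
  | .andR χ μ, φ => .and χ (μ.subst φ)
  | .exC x μ, φ => .ex x (μ.subst φ)
  | .allC x μ, φ => .all x (μ.subst φ)

/-- A fragment: a nonempty set of formulas satisfying the syntactic closure properties. -/
structure IsFragment (F : Set FOForm) : Prop where
  nonempty : F.Nonempty
  top_mem : ∀ (μ : FOCtx) (φ : FOForm), μ.subst φ ∈ F → μ.subst .top ∈ F
  bot_mem : ∀ (μ : FOCtx) (φ : FOForm), μ.subst φ ∈ F → μ.subst .bot ∈ F
  lab_mem : ∀ (μ : FOCtx) (φ : FOForm) (x a : ℕ), μ.subst φ ∈ F → μ.subst (.lab x a) ∈ F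
  or_mem : ∀ (μ : FOCtx) (φ ψ : FOForm),
    μ.subst (.or φ ψ) ∈ F ↔ μ.subst φ ∈ F ∧ μ.subst ψ ∈ F
  and_mem : ∀ (μ : FOCtx) (φ ψ : FOForm),
    μ.subst (.and φ ψ) ∈ F ↔ μ.subst φ ∈ F ∧ μ.subst ψ ∈ F
  negneg : ∀ (μ : FOCtx) (φ : FOForm), μ.subst (.not (.not φ)) ∈ F → μ.subst φ ∈ F
  ex_drop : ∀ (μ : FOCtx) (φ : FOForm) (x : ℕ),
    μ.subst (.ex x φ) ∈ F → x ∉ φ.FV → μ.subst φ ∈ F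
  all_drop : ∀ (μ : FOCtx) (φ : FOForm) (x : ℕ),
    μ.subst (.all x φ) ∈ F → x ∉ φ.FV → μ.subst φ ∈ F

/-- A fragment is order-stable if `μ(x<y) ∈ F ↔ μ(x≤y) ∈ F`. -/
def OrderStable (F : Set FOForm) : Prop :=
  ∀ (μ : FOCtx) (x y : ℕ), μ.subst (.lt x y) ∈ F ↔ μ.subst (.le x y) ∈ F

/-- A fragment is suc-stable if it satisfies the two closure conditions for `suc`, `min`, `max`, `empty`. -/
def SucStable (F : Set FOForm) : Prop :=
  (∀ (μ : FOCtx) (x y : ℕ), μ.subst (.suc x y) ∈ F →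
      μ.subst (.eq x y) ∈ F ∧ μ.subst (.fmax x) ∈ F ∧ μ.subst (.fmin y) ∈ F) ∧
  (∀ (μ : FOCtx) (x : ℕ), (μ.subst (.fmin x) ∈ F ∨ μ.subst (.fmax x) ∈ F) →
      μ.subst .empt ∈ F)

/-- The fragment has quantifier depth bounded by `n`. -/
def QDBoundedBy (F : Set FOForm) (n : ℕ) : Prop := ∀ φ ∈ F, φ.qd ≤ n

/-- Quantifiers, including the negated quantifiers. -/
inductive Quant : Type | qex | qall | qnex | qnall

def Quant.apply : Quant → ℕ → FOForm → FOForm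
  | .qex, x, φ => .ex x φ
  | .qall, x, φ => .all x φ
  | .qnex, x, φ => .not (.ex x φ)
  | .qnall, x, φ => .not (.all x φ)

/-- The reduct `Qx⁻¹F` of a set of formulas. -/
def reduct (Q : Quant) (x : ℕ) (F : Set FOForm) : Set FOForm := {φ | Q.apply x φ ∈ F}
/-! ### Generalized words -/

/-- A (countable) generalized word over the alphabet `ℕ`: a countable linear order
labeled by letters. Words are compared up to label-preserving order isomorphism
(`GWord.Iso`). -/
structure GWord : Type 1 where
  carrier : Type
  ord : LinearOrder carrier
  cnt : Countable carrier
  label : carrier → ℕ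

attribute [instance] GWord.ord GWord.cnt

/-- Label-preserving order isomorphism of generalized words. -/
def GWord.Iso (u v : GWord) : Prop :=
  ∃ f : u.carrier ≃o v.carrier, ∀ p : u.carrier, v.label (f p) = u.label p

/-- Satisfaction of a formula in a word under a (partial) valuation of the variables. -/
def GWord.Sat (u : GWord) : (ℕ → Option u.carrier) → FOForm → Prop
  | _, .top => True
  | _, .bot => False
  | _, .empt => IsEmpty u.carrier
  | α, .eq x y => ∃ p q : u.carrier, α x = some p ∧ α y = some q ∧ p = q
  | α, .lab x a => ∃ p : u.carrier, α x = some p ∧ u.label p = a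
  | α, .lt x y => ∃ p q : u.carrier, α x = some p ∧ α y = some q ∧ p < q
  | α, .le x y => ∃ p q : u.carrier, α x = some p ∧ α y = some q ∧ p ≤ q
  | α, .suc x y => ∃ p q : u.carrier, α x = some p ∧ α y = some q ∧ p < q ∧
      ∀ r : u.carrier, ¬ (p < r ∧ r < q)
  | α, .fmin x => ∃ p : u.carrier, α x = some p ∧ ∀ q : u.carrier, p ≤ q
  | α, .fmax x => ∃ p : u.carrier, α x = some p ∧ ∀ q : u.carrier, q ≤ p
  | α, .not φ => ¬ u.Sat α φ
  | α, .or φ ψ => u.Sat α φ ∨ u.Sat α ψ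
  | α, .and φ ψ => u.Sat α φ ∧ u.Sat α ψ
  | α, .ex x φ => ∃ p : u.carrier, u.Sat (fun y => if y = x then some p else α y) φ
  | α, .all x φ => ∀ p : u.carrier, u.Sat (fun y => if y = x then some p else α y) φ

/-- The empty valuation. -/
def emptyVal (u : GWord) : ℕ → Option u.carrier := fun _ => none

/-- A word satisfies a sentence. -/
def SatS (u : GWord) (φ : FOForm) : Prop := u.Sat (emptyVal u) φ

/-- Updating a valuation at a variable. -/
def updVal {u : GWord} (α : ℕ → Option u.carrier) (x : ℕ) (p : u.carrier) :
    ℕ → Option u.carrier :=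
  fun y => if y = x then some p else α y

/-- The domain of the valuation `α` is exactly the finite set `V`. -/
def ValDom {u : GWord} (α : ℕ → Option u.carrier) (V : Finset ℕ) : Prop :=
  ∀ x : ℕ, (α x).isSome ↔ x ∈ V

/-- A finite word, regarded as a generalized word. -/
def listToGWord (w : List ℕ) : GWord :=
  ⟨Fin w.length, inferInstance, inferInstance, w.get⟩

/-- Concatenation of generalized words. -/
def GWord.concat (u v : GWord) : GWord :=
  ⟨u.carrier ⊕ₗ v.carrier, inferInstance, inferInstance,
    fun p => Sum.elim u.label v.label (ofLex p)⟩

/-- The `τ`-power of a word, where `τ` is the order type of the countable linear order `T`: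
positions are pairs `(t, p)` ordered with the `T`-component dominant. -/
def GWord.pow (u : GWord) (T : Type) [LinearOrder T] [Countable T] : GWord :=
  ⟨T ×ₗ u.carrier, inferInstance, inferInstance, fun p => u.label (ofLex p).2⟩

/-- An index type of order type `ρ = ω + ζ·η + ω*`: a copy of `ℕ`, followed by `ℤ × ℚ`
ordered lexicographically with the `ℚ`-component dominant, followed by the negative
integers (the order dual of `ℕ`). -/
abbrev Rho : Type := (ℕ ⊕ₗ (ℚ ×ₗ ℤ)) ⊕ₗ ℕᵒᵈ

/-- ρ-rational words: built from finite words by concatenation and ρ-power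
(closed under isomorphism, since words are identified up to isomorphism). -/
inductive RhoRational : GWord → Prop where
  | fin (w : List ℕ) : RhoRational (listToGWord w)
  | concat {u v : GWord} : RhoRational u → RhoRational v → RhoRational (u.concat v)
  | rpow {u : GWord} : RhoRational u → RhoRational (u.pow Rho)
  | iso {u v : GWord} : RhoRational u → GWord.Iso u v → RhoRational v
/-! ### The `F`-game -/

/-- A configuration of the `F`-game: a set of formulas (an iterated reduct of the
original fragment) together with two valuations on two words. -/
structure Config : Type 1 where
  frag : Set FOForm
  w1 : GWord
  w2 : GWord
  val1 : ℕ → Option w1.carrier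
  val2 : ℕ → Option w2.carrier

/-- Spoiler's winning condition: the configuration contains a literal with free variables
inside the valuation domain, satisfied in the first valuation but not in the second. -/
def SpoilerWinsNow (C : Config) : Prop :=
  ∃ φ ∈ C.frag, φ.IsLiteral ∧ (∀ y ∈ φ.FV, (C.val1 y).isSome) ∧
    C.w1.Sat C.val1 φ ∧ ¬ C.w2.Sat C.val2 φ

/-- A set of configurations is a (Duplicator-)safe invariant: no configuration in it is
immediately winning for Spoiler, and for every move of Spoiler (a quantifier `Q`, a
variable `x` with nonempty reduct, and a quest `q` in the appropriate word) Duplicator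
has a reply `r` leading back into the set (the valuations are swapped for negated
quantifiers). -/
def SafeInv (Good : Set Config) : Prop :=
  ∀ D ∈ Good,
    (¬ SpoilerWinsNow D) ∧
    (∀ x : ℕ, (reduct .qex x D.frag).Nonempty →
      ∀ q : D.w1.carrier, ∃ r : D.w2.carrier,
        (⟨reduct .qex x D.frag, D.w1, D.w2, updVal D.val1 x q, updVal D.val2 x r⟩ : Config) ∈ Good) ∧
    (∀ x : ℕ, (reduct .qall x D.frag).Nonempty →
      ∀ q : D.w2.carrier, ∃ r : D.w1.carrier,
        (⟨reduct .qall x D.frag, D.w1, D.w2, updVal D.val1 x r, updVal D.val2 x q⟩ : Config) ∈ Good) ∧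
    (∀ x : ℕ, (reduct .qnex x D.frag).Nonempty →
      ∀ q : D.w2.carrier, ∃ r : D.w1.carrier,
        (⟨reduct .qnex x D.frag, D.w2, D.w1, updVal D.val2 x q, updVal D.val1 x r⟩ : Config) ∈ Good) ∧
    (∀ x : ℕ, (reduct .qnall x D.frag).Nonempty →
      ∀ q : D.w1.carrier, ∃ r : D.w2.carrier,
        (⟨reduct .qnall x D.frag, D.w2, D.w1, updVal D.val2 x r, updVal D.val1 x q⟩ : Config) ∈ Good)

/-- Duplicator has a winning strategy from a configuration of this (possibly infinite)
safety game iff some safe invariant contains the configuration. -/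
def DuplicatorWins (C : Config) : Prop :=
  ∃ Good : Set Config, C ∈ Good ∧ SafeInv Good

/-- Duplicator has a winning strategy in the `F`-game on `(u, v)` (from the initial
configuration with empty valuations). -/
def DuplicatorWinsGame (F : Set FOForm) (u v : GWord) : Prop :=
  DuplicatorWins ⟨F, u, v, fun _ => none, fun _ => none⟩

/-- Spoiler has a winning strategy: either the current configuration is already winning
for Spoiler, or Spoiler has a move such that every reply of Duplicator (in particular,
no possible reply) leads to a configuration where Spoiler wins. -/
inductive SpoilerWins : Config → Prop where
  | now {C : Config} : SpoilerWinsNow C → SpoilerWins C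
  | mex {C : Config} (x : ℕ) (h : (reduct .qex x C.frag).Nonempty) (q : C.w1.carrier)
      (h2 : ∀ r : C.w2.carrier, SpoilerWins
        ⟨reduct .qex x C.frag, C.w1, C.w2, updVal C.val1 x q, updVal C.val2 x r⟩) :
      SpoilerWins C

/-! ### π-terms and their interpretations -/

/-- π-terms over the alphabet `ℕ` (elements of the free π-algebra). -/
inductive PiTerm : Type where
  | letter (a : ℕ)
  | mul (s t : PiTerm)
  | pi (s : PiTerm)

/-- The interpretation `⟦·⟧_ρ` of π-terms as generalized words: letters become
single-position words, products concatenations, and the π-power the ρ-power. -/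
def PiTerm.evalRho : PiTerm → GWord
  | .letter a => listToGWord [a]
  | .mul s t => s.evalRho.concat t.evalRho
  | .pi s => s.evalRho.pow Rho

/-- The interpretation `⟦·⟧_m` of π-terms as finite words: the π-power becomes
the `m`-fold concatenation power. -/
def PiTerm.evalFin (m : ℕ) : PiTerm → GWord
  | .letter a => listToGWord [a]
  | .mul s t => (s.evalFin m).concat (t.evalFin m)
  | .pi s => (s.evalFin m).pow (Fin m)

/-- `mpow u k = u^(k+1)`: positive powers in any semigroup (or magma). -/
def mpow {M : Type} [Mul M] (u : M) : ℕ → M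
  | 0 => u
  | k+1 => mpow u k * u

/-- `k+1` is an idempotency exponent of `M`: `u^(k+1)` is idempotent for every `u`. -/
def IsIdemExpnt (M : Type) [Mul M] (k : ℕ) : Prop :=
  ∀ u : M, mpow u k * mpow u k = mpow u k

/-- Evaluation of a π-term in `M` under a letter assignment `h`, interpreting the
π-power as the `(k+1)`-st power. -/
def PiTerm.evalMul {M : Type} [Mul M] (h : ℕ → M) (k : ℕ) : PiTerm → M
  | .letter a => h a
  | .mul s t => (s.evalMul h k) * (t.evalMul h k)
  | .pi s => mpow (s.evalMul h k) k

/-- The identity `s = t` of π-terms holds in `M`: for every assignment of the letters and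
every idempotency exponent (i.e. interpreting `(·)^π` as the idempotent power), the two
terms evaluate equally. -/
def PiIdentityHolds (M : Type) [Mul M] (s t : PiTerm) : Prop :=
  ∀ (h : ℕ → M) (k : ℕ), IsIdemExpnt M k → s.evalMul h k = t.evalMul h k

/-! ### Languages, definability and syntactic monoids/semigroups -/

/-- All letters of the finite word `w` belong to the alphabet `A`. -/
def InAlph (A : Finset ℕ) (w : FreeMonoid ℕ) : Prop :=
  ∀ a ∈ FreeMonoid.toList w, a ∈ A

/-- A finite word, regarded as a generalized word. -/
def wordToGWord (w : FreeMonoid ℕ) : GWord := listToGWord (FreeMonoid.toList w)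

/-- The submonoid `A* ⊆ Λ*` of words over the finite alphabet `A`. -/
def wordsOver (A : Finset ℕ) : Submonoid (FreeMonoid ℕ) where
  carrier := {w | InAlph A w}
  mul_mem' := by
    intro u v hu hv a ha
    rw [FreeMonoid.toList_mul] at ha
    rcases List.mem_append.mp ha with h | h
    exacts [hu a h, hv a h]
  one_mem' := by
    intro a ha
    simp [FreeMonoid.toList_one] at ha

/-- The single-letter word `a ∈ A*`. -/
def letterWord (A : Finset ℕ) (a : ℕ) (ha : a ∈ A) : ↥(wordsOver A) :=
  ⟨FreeMonoid.of a, by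
    intro b hb
    rw [FreeMonoid.toList_of] at hb
    rcases List.mem_singleton.mp hb with rfl
    exact ha⟩

/-- The language over `A` defined by the sentence `φ`. -/
def LangOf (A : Finset ℕ) (φ : FOForm) : Set (FreeMonoid ℕ) :=
  {w | InAlph A w ∧ SatS (wordToGWord w) φ}

/-- `L ⊆ A*` is definable in `F` over the alphabet `A`. -/
def DefinableIn (F : Set FOForm) (A : Finset ℕ) (L : Set (FreeMonoid ℕ)) : Prop :=
  ∃ φ ∈ F, φ.IsSentence ∧ L = LangOf A φ

/-- The syntactic congruence of `L` on `A*`: `u ≡_L v` iff `xuy ∈ L ⇔ xvy ∈ L` for all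
contexts `x, y ∈ A*`. -/
def synCon (A : Finset ℕ) (L : Set (FreeMonoid ℕ)) : Con ↥(wordsOver A) where
  r u v := ∀ x y : FreeMonoid ℕ, InAlph A x → InAlph A y →
    ((x * ↑u * y ∈ L) ↔ (x * ↑v * y ∈ L))
  iseqv := ⟨fun _ _ _ _ _ => Iff.rfl,
    fun h x y hx hy => (h x y hx hy).symm,
    fun h1 h2 x y hx hy => (h1 x y hx hy).trans (h2 x y hx hy)⟩
  mul' := by
    intro w x y z h1 h2 a b ha hb
    have hyb : InAlph A ((y : FreeMonoid ℕ) * b) := by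
      intro c hc
      rw [FreeMonoid.toList_mul] at hc
      rcases List.mem_append.mp hc with h | h
      exacts [y.2 c h, hb c h]
    have hax : InAlph A (a * (x : FreeMonoid ℕ)) := by
      intro c hc
      rw [FreeMonoid.toList_mul] at hc
      rcases List.mem_append.mp hc with h | h
      exacts [ha c h, x.2 c h]
    have e1 : a * ↑(w * y) * b = a * (w : FreeMonoid ℕ) * (↑y * b) := by
      push_cast; simp [mul_assoc]
    have e2 : a * (x : FreeMonoid ℕ) * (↑y * b) = (a * ↑x) * ↑y * b := by
      simp [mul_assoc]
    have e3 : (a * (x : FreeMonoid ℕ)) * ↑z * b = a * ↑(x * z) * b := by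
      push_cast; simp [mul_assoc]
    rw [e1, h1 a (↑y * b) ha hyb, e2, h2 (a * ↑x) b hax hb, e3]

/-- The syntactic monoid `M_L = A*/≡_L`. -/
def SynMonoid (A : Finset ℕ) (L : Set (FreeMonoid ℕ)) : Type := (synCon A L).Quotient

instance (A : Finset ℕ) (L : Set (FreeMonoid ℕ)) : Monoid (SynMonoid A L) :=
  inferInstanceAs (Monoid (synCon A L).Quotient)

/-- The subsemigroup `A⁺ ⊆ Λ*` of nonempty words over the finite alphabet `A`. -/
def plusWordsOver (A : Finset ℕ) : Subsemigroup (FreeMonoid ℕ) where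
  carrier := {w | w ≠ 1 ∧ InAlph A w}
  mul_mem' := by
    intro u v hu hv
    refine ⟨?_, ?_⟩
    · intro h
      apply hu.1
      have : FreeMonoid.toList (u * v) = FreeMonoid.toList (1 : FreeMonoid ℕ) := by rw [h]
      rw [FreeMonoid.toList_mul, FreeMonoid.toList_one] at this
      exact (List.append_eq_nil_iff.mp this).1
    · intro a ha
      rw [FreeMonoid.toList_mul] at ha
      rcases List.mem_append.mp ha with h | h
      exacts [hu.2 a h, hv.2 a h]

/-- The syntactic congruence of `L ⊆ A⁺` on `A⁺` (contexts range over `A*`). -/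
def synConS (A : Finset ℕ) (L : Set (FreeMonoid ℕ)) : Con ↥(plusWordsOver A) where
  r u v := ∀ x y : FreeMonoid ℕ, InAlph A x → InAlph A y →
    ((x * ↑u * y ∈ L) ↔ (x * ↑v * y ∈ L))
  iseqv := ⟨fun _ _ _ _ _ => Iff.rfl,
    fun h x y hx hy => (h x y hx hy).symm,
    fun h1 h2 x y hx hy => (h1 x y hx hy).trans (h2 x y hx hy)⟩
  mul' := by
    intro w x y z h1 h2 a b ha hb
    have hyb : InAlph A ((y : FreeMonoid ℕ) * b) := by
      intro c hc
      rw [FreeMonoid.toList_mul] at hc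
      rcases List.mem_append.mp hc with h | h
      exacts [y.2.2 c h, hb c h]
    have hax : InAlph A (a * (x : FreeMonoid ℕ)) := by
      intro c hc
      rw [FreeMonoid.toList_mul] at hc
      rcases List.mem_append.mp hc with h | h
      exacts [ha c h, x.2.2 c h]
    have e1 : a * ↑(w * y) * b = a * (w : FreeMonoid ℕ) * (↑y * b) := by
      push_cast; simp [mul_assoc]
    have e2 : a * (x : FreeMonoid ℕ) * (↑y * b) = (a * ↑x) * ↑y * b := by
      simp [mul_assoc]
    have e3 : (a * (x : FreeMonoid ℕ)) * ↑z * b = a * ↑(x * z) * b := by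
      push_cast; simp [mul_assoc]
    rw [e1, h1 a (↑y * b) ha hyb, e2, h2 (a * ↑x) b hax hb, e3]

/-- The syntactic semigroup of `L ⊆ A⁺`. -/
def SynSemigroup (A : Finset ℕ) (L : Set (FreeMonoid ℕ)) : Type := (synConS A L).Quotient

instance (A : Finset ℕ) (L : Set (FreeMonoid ℕ)) : Semigroup (SynSemigroup A L) :=
  inferInstanceAs (Semigroup (synConS A L).Quotient)

/-- The language of nonempty words over `A` defined by the sentence `φ`. -/
def LangOfPlus (A : Finset ℕ) (φ : FOForm) : Set (FreeMonoid ℕ) :=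
  {w | w ≠ 1 ∧ InAlph A w ∧ SatS (wordToGWord w) φ}

/-- `L ⊆ A⁺` is definable in `F` over the alphabet `A`, over nonempty words. -/
def DefinablePlusIn (F : Set FOForm) (A : Finset ℕ) (L : Set (FreeMonoid ℕ)) : Prop :=
  ∃ φ ∈ F, φ.IsSentence ∧ L = LangOfPlus A φ

/-! ### Concatenation of finite families and unions of valuations -/

/-- Concatenation of a finite family of words `u 0, u 1, …, u (k-1)` (in this order). -/
def GWord.concatFam {k : ℕ} (u : Fin k → GWord) : GWord :=
  ⟨Σₗ i : Fin k, (u i).carrier, inferInstance,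
    inferInstanceAs (Countable (Lex (Σ i : Fin k, (u i).carrier))),
    fun p => (u (ofLex p).1).label (ofLex p).2⟩

/-- The union of a family of valuations with (mutually disjoint) domains, as a valuation
on the concatenation. -/
def combineVal {k : ℕ} (u : Fin k → GWord) (α : ∀ i : Fin k, ℕ → Option (u i).carrier)
    (x : ℕ) : Option (GWord.concatFam u).carrier :=
  (List.finRange k).findSome? fun i => ((α i x).map fun p => toLex ⟨i, p⟩)

/-!
Duplicator plays the `Qx⁻¹F`-game by pretending that Spoiler has first played `Q x` in the
`F`-game. The starting configuration is not lost for her: a literal of `Qx⁻¹F` with free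
variables in `V` does not mention `x`, so it (or its negation, for negated `Q`) already lies
in `F`. Any move of Spoiler in the `Qx⁻¹F`-game is, after discarding `Q x`, also a move in the
`F`-game, so once Spoiler moves both words are nonempty and the pretended `x`-pick and
Duplicator's answer to it exist. From then on Duplicator follows her `F`-strategy; the two plays
differ only in the value of `x`, which the `Qx⁻¹F`-game forgets, and forgetting a variable
never helps Spoiler.
-/

theorem GWord.sat_congr (u : GWord) {α α' : ℕ → Option u.carrier} (φ : FOForm)
    (h : ∀ y ∈ φ.FV, α y = α' y) : u.Sat α φ ↔ u.Sat α' φ := by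
  induction φ generalizing α α' with
  | not φ ih => exact not_congr (ih h)
  | or φ ψ ihφ ihψ =>
    exact or_congr (ihφ fun y hy => h y (Finset.mem_union_left _ hy))
      (ihψ fun y hy => h y (Finset.mem_union_right _ hy))
  | and φ ψ ihφ ihψ =>
    exact and_congr (ihφ fun y hy => h y (Finset.mem_union_left _ hy))
      (ihψ fun y hy => h y (Finset.mem_union_right _ hy))
  | ex z φ ih | all z φ ih =>
    simp only [GWord.Sat]
    first
      | refine exists_congr fun p => ih fun y hy => ?_
      | refine forall_congr' fun p => ih fun y hy => ?_
    split_ifs with hyz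
    · rfl
    · exact h y (Finset.mem_erase.mpr ⟨hyz, hy⟩)
  | _ => simp_all [GWord.Sat, FOForm.FV]

theorem updVal_eq_update {u : GWord} (α : ℕ → Option u.carrier) (x : ℕ) (p : u.carrier) :
    updVal α x p = Function.update α x (some p) := by
  funext y
  simp [updVal, Function.update_apply]

def Quant.neg : Quant → Quant
  | .qex => .qnex
  | .qall => .qnall
  | .qnex => .qex
  | .qnall => .qall

/-- What `Q x (Q' y φ)` becomes, up to double negation, once `Q x` is discarded. -/
def Quant.polarize : Quant → Quant → Quant
  | .qex, Q' | .qall, Q' => Q'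
  | .qnex, Q' | .qnall, Q' => Q'.neg

def Quant.ctx : Quant → ℕ → FOCtx → FOCtx
  | .qex, x, μ => .exC x μ
  | .qall, x, μ => .allC x μ
  | .qnex, x, μ => .notC (.exC x μ)
  | .qnall, x, μ => .notC (.allC x μ)

def Quant.polarityCtx : Quant → FOCtx
  | .qex | .qall => .hole
  | .qnex | .qnall => .notC .hole

@[simp]
theorem Quant.ctx_subst (Q : Quant) (x : ℕ) (μ : FOCtx) (φ : FOForm) :
    (Q.ctx x μ).subst φ = Q.apply x (μ.subst φ) := by
  cases Q <;> rfl

theorem IsFragment.polarityCtx_subst_mem {F : Set FOForm} (hF : IsFragment F) {Q : Quant}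
    {x : ℕ} {φ : FOForm} (h : Q.apply x φ ∈ F) (hx : x ∉ φ.FV) :
    Q.polarityCtx.subst φ ∈ F := by
  cases Q
  exacts [hF.ex_drop .hole φ x h hx, hF.all_drop .hole φ x h hx,
    hF.ex_drop (.notC .hole) φ x h hx, hF.all_drop (.notC .hole) φ x h hx]

theorem IsFragment.reduct_polarize_nonempty {F : Set FOForm} (hF : IsFragment F)
    {Q Q' : Quant} {x y : ℕ} (h : (reduct Q' y (reduct Q x F)).Nonempty) :
    (reduct (Q.polarize Q') y F).Nonempty := by
  obtain ⟨φ, hφ⟩ := h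
  have htop : Q.apply x (Q'.apply y .top) ∈ F := by
    simpa [FOCtx.subst] using
      hF.top_mem (Q.ctx x (Q'.ctx y .hole)) φ (by simpa [reduct, FOCtx.subst] using hφ)
  have hdrop := hF.polarityCtx_subst_mem htop (by cases Q' <;> simp [Quant.apply, FOForm.FV])
  refine ⟨.top, ?_⟩
  cases Q <;> cases Q' <;> first | exact hdrop | exact hF.negneg .hole _ hdrop

def Config.reduct (C : Config) (Q : Quant) (x : ℕ) : Config :=
  match Q with
  | .qex | .qall => ⟨EFGames.reduct Q x C.frag, C.w1, C.w2, C.val1, C.val2⟩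
  | .qnex | .qnall => ⟨EFGames.reduct Q x C.frag, C.w2, C.w1, C.val2, C.val1⟩

def Config.forget (C : Config) (x : ℕ) : Config :=
  ⟨C.frag, C.w1, C.w2, Function.update C.val1 x none, Function.update C.val2 x none⟩

def Config.CanPick (C : Config) : Quant → Prop
  | .qex | .qnall => Nonempty C.w1.carrier
  | .qall | .qnex => Nonempty C.w2.carrier

def Config.CanMove (C : Config) : Prop :=
  ∃ Q y, (EFGames.reduct Q y C.frag).Nonempty ∧ C.CanPick Q

theorem IsFragment.canMove_of_canMove_reduct {C : Config} (hF : IsFragment C.frag) {Q : Quant}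
    {x : ℕ} (h : (C.reduct Q x).CanMove) : C.CanMove := by
  obtain ⟨Q', y, hne, hpick⟩ := h
  refine ⟨Q.polarize Q', y, ?_, ?_⟩
  · cases Q <;> exact hF.reduct_polarize_nonempty hne
  · cases Q <;> cases Q' <;> exact hpick

section Strategies

variable {S T : Set Config}

def SafeAt (S : Set Config) (D : Config) : Prop :=
  (¬ SpoilerWinsNow D) ∧
    (∀ x : ℕ, (reduct .qex x D.frag).Nonempty →
      ∀ q : D.w1.carrier, ∃ r : D.w2.carrier,
        (⟨reduct .qex x D.frag, D.w1, D.w2, updVal D.val1 x q, updVal D.val2 x r⟩ : Config) ∈ S) ∧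
    (∀ x : ℕ, (reduct .qall x D.frag).Nonempty →
      ∀ q : D.w2.carrier, ∃ r : D.w1.carrier,
        (⟨reduct .qall x D.frag, D.w1, D.w2, updVal D.val1 x r, updVal D.val2 x q⟩ : Config) ∈ S) ∧
    (∀ x : ℕ, (reduct .qnex x D.frag).Nonempty →
      ∀ q : D.w2.carrier, ∃ r : D.w1.carrier,
        (⟨reduct .qnex x D.frag, D.w2, D.w1, updVal D.val2 x q, updVal D.val1 x r⟩ : Config) ∈ S) ∧
    (∀ x : ℕ, (reduct .qnall x D.frag).Nonempty →
      ∀ q : D.w1.carrier, ∃ r : D.w2.carrier,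
        (⟨reduct .qnall x D.frag, D.w2, D.w1, updVal D.val2 x r, updVal D.val1 x q⟩ : Config) ∈ S)

theorem SafeInv.safeAt (hS : SafeInv S) {D : Config} (hD : D ∈ S) :
    SafeAt S D :=
  hS D hD

theorem SafeAt.mono {D : Config} (h : SafeAt S D) (hST : S ⊆ T) :
    SafeAt T D := by
  obtain ⟨hnw, hex, hall, hnex, hnall⟩ := h
  exact ⟨hnw, fun x hne q => (hex x hne q).imp fun _ h => hST h,
    fun x hne q => (hall x hne q).imp fun _ h => hST h,
    fun x hne q => (hnex x hne q).imp fun _ h => hST h,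
    fun x hne q => (hnall x hne q).imp fun _ h => hST h⟩

theorem SafeAt.nonempty_of_canMove {D : Config} (hD : SafeAt S D)
    (h : D.CanMove) : Nonempty D.w1.carrier ∧ Nonempty D.w2.carrier := by
  obtain ⟨-, hex, hall, hnex, hnall⟩ := hD
  obtain ⟨Q, y, hne, hpick⟩ := h
  cases Q <;> obtain ⟨q⟩ := hpick
  · obtain ⟨r, -⟩ := hex y hne q; exact ⟨⟨q⟩, ⟨r⟩⟩
  · obtain ⟨r, -⟩ := hall y hne q; exact ⟨⟨r⟩, ⟨q⟩⟩
  · obtain ⟨r, -⟩ := hnex y hne q; exact ⟨⟨r⟩, ⟨q⟩⟩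
  · obtain ⟨r, -⟩ := hnall y hne q; exact ⟨⟨q⟩, ⟨r⟩⟩

theorem duplicatorWins_of_canMove {C : Config} (hS : SafeInv S)
    (hC : ¬ SpoilerWinsNow C) (hmove : C.CanMove → C ∈ S) : DuplicatorWins C := by
  refine ⟨insert C S, Set.mem_insert C S, ?_⟩
  rintro D (rfl | hD)
  · by_cases h : D.CanMove
    · exact (hS.safeAt (hmove h)).mono (Set.subset_insert D S)
    · exact ⟨hC, fun y hne q => (h ⟨.qex, y, hne, ⟨q⟩⟩).elim,
        fun y hne q => (h ⟨.qall, y, hne, ⟨q⟩⟩).elim,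
        fun y hne q => (h ⟨.qnex, y, hne, ⟨q⟩⟩).elim,
        fun y hne q => (h ⟨.qnall, y, hne, ⟨q⟩⟩).elim⟩
  · exact (hS.safeAt hD).mono (Set.subset_insert C S)

theorem SpoilerWinsNow.of_forget {C : Config} {x : ℕ} (h : SpoilerWinsNow (C.forget x)) :
    SpoilerWinsNow C := by
  obtain ⟨φ, hφ, hlit, hdom, h1, h2⟩ := h
  have hx : x ∉ φ.FV := fun hx => by simpa [Config.forget] using hdom x hx
  have hagree {w : GWord} (a : ℕ → Option w.carrier) :
      ∀ y ∈ φ.FV, Function.update a x none y = a y :=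
    fun y hy => Function.update_of_ne (ne_of_mem_of_not_mem hy hx) _ _
  exact ⟨φ, hφ, hlit, fun y hy => hagree C.val1 y hy ▸ hdom y hy,
    (C.w1.sat_congr φ (hagree C.val1)).1 h1, fun h => h2 ((C.w2.sat_congr φ (hagree C.val2)).2 h)⟩

theorem mem_union_image_forget {G : Set FOForm} {w1 w2 : GWord}
    {a : ℕ → Option w1.carrier} {b : ℕ → Option w2.carrier} {x y : ℕ} {q : w1.carrier}
    {r : w2.carrier} (h : (⟨G, w1, w2, updVal a y q, updVal b y r⟩ : Config) ∈ S) :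
    (⟨G, w1, w2, updVal (Function.update a x none) y q, updVal (Function.update b x none) y r⟩ :
      Config) ∈ S ∪ (Config.forget · x) '' S := by
  by_cases hyx : y = x
  · subst hyx
    left
    simpa [updVal_eq_update] using h
  · right
    exact ⟨_, h, by simp [Config.forget, updVal_eq_update, Function.update_comm hyx]⟩

theorem SafeInv.union_forget (hS : SafeInv S) (x : ℕ) :
    SafeInv (S ∪ (Config.forget · x) '' S) := by
  rintro _ (hD | ⟨D, hD, rfl⟩)
  · exact (hS.safeAt hD).mono Set.subset_union_left
  · obtain ⟨hnw, hex, hall, hnex, hnall⟩ := hS D hD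
    refine ⟨fun h => hnw h.of_forget, fun y hne q => ?_, fun y hne q => ?_,
      fun y hne q => ?_, fun y hne q => ?_⟩
    · obtain ⟨r, hr⟩ := hex y hne q; exact ⟨r, mem_union_image_forget hr⟩
    · obtain ⟨r, hr⟩ := hall y hne q; exact ⟨r, mem_union_image_forget hr⟩
    · obtain ⟨r, hr⟩ := hnex y hne q; exact ⟨r, mem_union_image_forget hr⟩
    · obtain ⟨r, hr⟩ := hnall y hne q; exact ⟨r, mem_union_image_forget hr⟩

theorem spoilerWinsNow_of_not_mem {F : Set FOForm} (hF : IsFragment F) {u v : GWord}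
    {α : ℕ → Option u.carrier} {β : ℕ → Option v.carrier} {φ : FOForm} (hlit : φ.IsLiteral)
    (hφ : .not φ ∈ F) (hdom : ∀ y ∈ φ.FV, (α y).isSome) (h1 : v.Sat β φ) (h2 : ¬ u.Sat α φ) :
    SpoilerWinsNow ⟨F, u, v, α, β⟩ := by
  rcases hlit with hat | ⟨ψ, hψ, rfl⟩
  · exact ⟨.not φ, hφ, Or.inr ⟨φ, hat, rfl⟩, hdom, h2, fun h => h h1⟩
  · exact ⟨ψ, hF.negneg .hole ψ hφ, Or.inl hψ, hdom, not_not.mp h2, h1⟩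

theorem not_spoilerWinsNow_reduct {F : Set FOForm} (hF : IsFragment F) {V : Finset ℕ}
    {u v : GWord} {α : ℕ → Option u.carrier} {β : ℕ → Option v.carrier}
    (hα : ValDom α V) (hβ : ValDom β V) (h : ¬ SpoilerWinsNow ⟨F, u, v, α, β⟩) {x : ℕ}
    (hx : x ∉ V) (Q : Quant) : ¬ SpoilerWinsNow ((⟨F, u, v, α, β⟩ : Config).reduct Q x) := by
  rintro ⟨φ, hφ, hlit, hdom, h1, h2⟩
  have hV : ∀ y ∈ φ.FV, y ∈ V := by
    cases Q <;> first
      | exact fun y hy => (hα y).1 (hdom y hy)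
      | exact fun y hy => (hβ y).1 (hdom y hy)
  have hφ' : Q.apply x φ ∈ F := by cases Q <;> exact hφ
  have hdrop := hF.polarityCtx_subst_mem hφ' fun hxφ => hx (hV x hxφ)
  cases Q
  · exact h ⟨φ, hdrop, hlit, hdom, h1, h2⟩
  · exact h ⟨φ, hdrop, hlit, hdom, h1, h2⟩
  · exact h (spoilerWinsNow_of_not_mem hF hlit hdrop (fun y hy => (hα y).2 (hV y hy)) h1 h2)
  · exact h (spoilerWinsNow_of_not_mem hF hlit hdrop (fun y hy => (hα y).2 (hV y hy)) h1 h2)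

theorem SafeAt.reduct_mem_image_forget {F : Set FOForm} {u v : GWord}
    {α : ℕ → Option u.carrier} {β : ℕ → Option v.carrier} (hD : SafeAt S ⟨F, u, v, α, β⟩)
    {Q : Quant} {x : ℕ} (hred : (reduct Q x F).Nonempty) (hαx : α x = none) (hβx : β x = none)
    (hu : Nonempty u.carrier) (hv : Nonempty v.carrier) :
    (⟨F, u, v, α, β⟩ : Config).reduct Q x ∈ (Config.forget · x) '' S := by
  obtain ⟨p⟩ := hu
  obtain ⟨s⟩ := hv
  obtain ⟨-, hex, hall, hnex, hnall⟩ := hD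
  cases Q
  · obtain ⟨r, hr⟩ := hex x hred p
    exact ⟨_, hr, by simp [Config.forget, Config.reduct, updVal_eq_update, hαx, hβx]⟩
  · obtain ⟨r, hr⟩ := hall x hred s
    exact ⟨_, hr, by simp [Config.forget, Config.reduct, updVal_eq_update, hαx, hβx]⟩
  · obtain ⟨r, hr⟩ := hnex x hred s
    exact ⟨_, hr, by simp [Config.forget, Config.reduct, updVal_eq_update, hαx, hβx]⟩
  · obtain ⟨r, hr⟩ := hnall x hred p
    exact ⟨_, hr, by simp [Config.forget, Config.reduct, updVal_eq_update, hαx, hβx]⟩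

end Strategies

theorem duplicatorWins_reduct {F : Set FOForm} (hF : IsFragment F) {V : Finset ℕ} {u v : GWord}
    {α : ℕ → Option u.carrier} {β : ℕ → Option v.carrier} (hα : ValDom α V) (hβ : ValDom β V)
    (hwin : DuplicatorWins ⟨F, u, v, α, β⟩) {Q : Quant} {x : ℕ} (hx : x ∉ V)
    (hred : (reduct Q x F).Nonempty) :
    DuplicatorWins ((⟨F, u, v, α, β⟩ : Config).reduct Q x) := by
  obtain ⟨S, h0, hS⟩ := hwin
  have hD := hS.safeAt h0
  have hαx : α x = none := Option.not_isSome_iff_eq_none.mp fun h => hx ((hα x).1 h)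
  have hβx : β x = none := Option.not_isSome_iff_eq_none.mp fun h => hx ((hβ x).1 h)
  refine duplicatorWins_of_canMove (hS.union_forget x)
    (not_spoilerWinsNow_reduct hF hα hβ hD.1 hx Q) fun hmove => Or.inr ?_
  obtain ⟨hu, hv⟩ := hD.nonempty_of_canMove (hF.canMove_of_canMove_reduct hmove)
  exact hD.reduct_mem_image_forget hred hαx hβx hu hv

/-- Lemma: discarding quantifiers: if Duplicator wins
`(F, ⟨u, α⟩, ⟨v, β⟩)`, `x ∉ V` and `Qx⁻¹F ≠ ∅`, then Duplicator wins
`(Qx⁻¹F, ⟨u, α⟩, ⟨v, β⟩)` for non-negated `Q` and `(Qx⁻¹F, ⟨v, β⟩, ⟨u, α⟩)` for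
negated `Q`. -/
theorem statement_16 (F : Set FOForm) (hF : IsFragment F) (V : Finset ℕ)
    (u v : GWord) (α : ℕ → Option u.carrier) (β : ℕ → Option v.carrier)
    (hα : ValDom α V) (hβ : ValDom β V)
    (hwin : DuplicatorWins ⟨F, u, v, α, β⟩)
    (Q : Quant) (x : ℕ) (hx : x ∉ V) (hred : (reduct Q x F).Nonempty) :
    ((Q = Quant.qex ∨ Q = Quant.qall) →
        DuplicatorWins ⟨reduct Q x F, u, v, α, β⟩) ∧
    ((Q = Quant.qnex ∨ Q = Quant.qnall) →
        DuplicatorWins ⟨reduct Q x F, v, u, β, α⟩) := by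
  constructor <;> rintro (rfl | rfl) <;> exact duplicatorWins_reduct hF hα hβ hwin hx hred

end EFGames
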